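/- Let ψ be a smooth function on [0,∞) with support contained in [0,1), and let β ∈ {−1, +1}. Then there is a constant C (depending only on ψ and β) such that for all r ≥ 1, | ∫₀¹ e^{i β r w²} ψ(w) dw − (1/2) √(π/r) · e^{i β π/4} · ψ(0) | ≤ C / r. -/

import Mathlib

open intervalIntegral

open Complex MeasureTheory Set Filter Topology

lemma norm_cexp_neg_mul_sq_le (z : ℂ) (hz : 0 ≤ z.re) (w : ℝ) :
    ‖Complex.exp (-z * (w:ℂ)^2)‖ ≤ 1 := by
  rw [Complex.norm_exp]
  apply Real.exp_le_one_iff.mpr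
  have heq : (-z * (w:ℂ)^2) = -(z * ((w^2:ℝ):ℂ)) := by push_cast; ring
  rw [heq, Complex.neg_re, Complex.mul_re, Complex.ofReal_re, Complex.ofReal_im]
  nlinarith [sq_nonneg w]


lemma tail_bound (z : ℂ) (hz : 0 < z.re) (r : ℝ) (hr : 1 ≤ r) (hzr : r ≤ ‖z‖) :
    ‖∫ w in Set.Ioi (1:ℝ), Complex.exp (-z * (w:ℂ)^2)‖ ≤ 1 / r := by
  have hr0 : (0:ℝ) < r := lt_of_lt_of_le one_pos hr
  have hz0 : z ≠ 0 := fun h => by simp [h] at hz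
  set g : ℝ → ℂ := fun w => Complex.exp (-z * (w:ℂ)^2) with hg
  set h : ℝ → ℂ := fun w => (2*z)⁻¹ * ((w:ℂ)^2)⁻¹ * Complex.exp (-z * (w:ℂ)^2) with hh
  set f : ℝ → ℂ := fun w => -((2*z)⁻¹) * (Complex.exp (-z * (w:ℂ)^2) * (w:ℂ)⁻¹) with hf
  have hnormh : ∀ w : ℝ, 0 < w → ‖h w‖ = ‖(2*z)⁻¹‖ * (w^2)⁻¹ * ‖g w‖ := by
    intro w hw0
    rw [hh]
    simp only [norm_mul, norm_inv, norm_pow, Complex.norm_real, Real.norm_eq_abs,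
      _root_.abs_of_pos hw0]
    rfl
  have hnormz : ‖(2*z)⁻¹‖ ≤ (2*r)⁻¹ := by
    rw [norm_inv]
    apply inv_anti₀ (by positivity)
    rw [norm_mul]
    have h2 : ‖(2:ℂ)‖ = 2 := by norm_num
    rw [h2]
    nlinarith
  -- derivative
  have hderiv : ∀ x ∈ Set.Ici (1:ℝ), HasDerivAt f (g x + h x) x := by
    intro x hx
    have hx0 : (0:ℝ) < x := lt_of_lt_of_le one_pos hx
    have hx0' : (x:ℂ) ≠ 0 := by exact_mod_cast hx0.ne'
    have h1 : HasDerivAt (fun w : ℝ => (w : ℂ)) 1 x := by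
      have := Complex.ofRealCLM.hasDerivAt (x := x); exact this
    have h2 : HasDerivAt (fun w : ℝ => (w:ℂ)^2) ((x:ℂ) + (x:ℂ)) x := by
      have := h1.mul h1; simp only [pow_two, one_mul, mul_one] at this ⊢; exact this
    have h3 : HasDerivAt (fun w : ℝ => -z * (w:ℂ)^2) (-z * ((x:ℂ) + (x:ℂ))) x :=
      h2.const_mul (-z)
    have hE : HasDerivAt (fun w : ℝ => Complex.exp (-z * (w:ℂ)^2))
        (Complex.exp (-z * (x:ℂ)^2) * (-z * ((x:ℂ) + (x:ℂ)))) x := h3.cexp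
    have hinv : HasDerivAt (fun w : ℝ => ((w:ℂ))⁻¹) (-((x:ℂ)^2)⁻¹) x :=
      (hasDerivAt_inv hx0').comp_ofReal
    have := ((hE.mul hinv).const_mul (-((2*z)⁻¹)))
    convert this using 1
    · rfl
    · rfl
    rw [hg, hh]
    field_simp
    ring
  -- integrability
  have hgint : IntegrableOn g (Set.Ioi 1) := (integrable_cexp_neg_mul_sq hz).integrableOn
  have hhmeas : AEStronglyMeasurable h (volume.restrict (Set.Ioi (1:ℝ))) := by
    apply ContinuousOn.aestronglyMeasurable _ measurableSet_Ioi
    apply ContinuousOn.mul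
    · apply ContinuousOn.mul continuousOn_const
      apply ContinuousOn.inv₀ (by fun_prop)
      intro x hx
      have hx0 : (0:ℝ) < x := lt_of_lt_of_le one_pos (le_of_lt hx)
      exact pow_ne_zero 2 (by exact_mod_cast hx0.ne')
    · fun_prop
  have hbound : ∀ w ∈ Set.Ioi (1:ℝ), ‖h w‖ ≤ ‖(2*z)⁻¹‖ * ‖g w‖ := by
    intro w hw
    have hw1 : (1:ℝ) < w := hw
    have hw0 : (0:ℝ) < w := lt_trans one_pos hw1
    rw [hnormh w hw0]
    have hle1 : (w^2)⁻¹ ≤ 1 := by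
      rw [inv_le_one_iff₀]; right; nlinarith
    calc ‖(2*z)⁻¹‖ * (w^2)⁻¹ * ‖g w‖ ≤ ‖(2*z)⁻¹‖ * 1 * ‖g w‖ := by
          gcongr
      _ = ‖(2*z)⁻¹‖ * ‖g w‖ := by ring
  have hhint : IntegrableOn h (Set.Ioi 1) := by
    apply Integrable.mono' ((hgint.norm).const_mul ‖(2*z)⁻¹‖) hhmeas
    exact (ae_restrict_iff' measurableSet_Ioi).mpr (Filter.Eventually.of_forall hbound)
  -- limit at infinity
  have hlim : Tendsto f atTop (𝓝 (0:ℂ)) := by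
    rw [tendsto_zero_iff_norm_tendsto_zero]
    apply squeeze_zero' (Filter.Eventually.of_forall fun w => norm_nonneg _)
    · filter_upwards [Filter.eventually_ge_atTop (1:ℝ)] with w hw
      have hw0 : (0:ℝ) < w := lt_of_lt_of_le one_pos hw
      show ‖f w‖ ≤ ‖(2*z)⁻¹‖ * w⁻¹
      have heq : ‖f w‖ = ‖(2*z)⁻¹‖ * (‖g w‖ * w⁻¹) := by
        rw [hf]
        simp only [norm_mul, norm_neg, norm_inv, Complex.norm_real, Real.norm_eq_abs,
          _root_.abs_of_pos hw0]
        rfl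
      rw [heq]
      have h1 : ‖g w‖ ≤ 1 := norm_cexp_neg_mul_sq_le z hz.le w
      calc ‖(2*z)⁻¹‖ * (‖g w‖ * w⁻¹) ≤ ‖(2*z)⁻¹‖ * (1 * w⁻¹) := by
            gcongr
        _ = ‖(2*z)⁻¹‖ * w⁻¹ := by ring
    · simpa using tendsto_inv_atTop_zero.const_mul ‖(2*z)⁻¹‖
  -- FTC
  have hFTC := MeasureTheory.integral_Ioi_of_hasDerivAt_of_tendsto' hderiv (hgint.add hhint) hlim
  have hsplit : ∫ w in Set.Ioi (1:ℝ), (g w + h w)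
      = (∫ w in Set.Ioi (1:ℝ), g w) + ∫ w in Set.Ioi (1:ℝ), h w :=
    MeasureTheory.integral_add hgint hhint
  have hf1 : f 1 = -((2*z)⁻¹) * Complex.exp (-z) := by rw [hf]; norm_num
  have hgeq : ∫ w in Set.Ioi (1:ℝ), g w
      = (2*z)⁻¹ * Complex.exp (-z) - ∫ w in Set.Ioi (1:ℝ), h w := by
    rw [hsplit, hf1] at hFTC
    linear_combination hFTC
  -- bounds
  have hexpz : ‖Complex.exp (-z)‖ ≤ 1 := by
    rw [Complex.norm_exp]
    apply Real.exp_le_one_iff.mpr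
    simp [hz.le]
  have hInt2 : ∫ w in Set.Ioi (1:ℝ), (2*r)⁻¹ * w ^ (-2 : ℝ) = (2*r)⁻¹ := by
    rw [MeasureTheory.integral_const_mul, integral_Ioi_rpow_of_lt (by norm_num) one_pos]
    norm_num
  have hIntble2 : IntegrableOn (fun w : ℝ => (2*r)⁻¹ * w ^ (-2:ℝ)) (Set.Ioi 1) :=
    (integrableOn_Ioi_rpow_of_lt (by norm_num) one_pos).const_mul _
  have htail : ‖∫ w in Set.Ioi (1:ℝ), h w‖ ≤ (2*r)⁻¹ := by
    have hb : ∀ w ∈ Set.Ioi (1:ℝ), ‖h w‖ ≤ (2*r)⁻¹ * w ^ (-2:ℝ) := by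
      intro w hw
      have hw1 : (1:ℝ) < w := hw
      have hw0 : (0:ℝ) < w := lt_trans one_pos hw1
      have hrw : w ^ (-2:ℝ) = (w^2)⁻¹ := by
        rw [Real.rpow_neg hw0.le, ← Real.rpow_natCast w 2]
        norm_num
      rw [hnormh w hw0, hrw]
      clear hrw
      have hg1 : ‖g w‖ ≤ 1 := norm_cexp_neg_mul_sq_le z hz.le w
      calc ‖(2*z)⁻¹‖ * (w^2)⁻¹ * ‖g w‖ ≤ (2*r)⁻¹ * (w^2)⁻¹ * 1 :=
            mul_le_mul (mul_le_mul hnormz le_rfl (by positivity) (by positivity)) hg1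
              (norm_nonneg _) (by positivity)
        _ = (2*r)⁻¹ * (w^2)⁻¹ := by ring
    calc ‖∫ w in Set.Ioi (1:ℝ), h w‖ ≤ ∫ w in Set.Ioi (1:ℝ), (2*r)⁻¹ * w ^ (-2:ℝ) := by
          apply MeasureTheory.norm_integral_le_of_norm_le hIntble2
          exact (ae_restrict_iff' measurableSet_Ioi).mpr (Filter.Eventually.of_forall hb)
      _ = (2*r)⁻¹ := hInt2
  rw [hgeq]
  calc ‖(2*z)⁻¹ * Complex.exp (-z) - ∫ w in Set.Ioi (1:ℝ), h w‖
      ≤ ‖(2*z)⁻¹ * Complex.exp (-z)‖ + ‖∫ w in Set.Ioi (1:ℝ), h w‖ := norm_sub_le _ _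
    _ ≤ (2*r)⁻¹ * 1 + (2*r)⁻¹ :=
        add_le_add (by rw [norm_mul]
                       exact mul_le_mul hnormz hexpz (norm_nonneg _) (by positivity)) htail
    _ = 1 / r := by
        rw [mul_one, ← two_mul, mul_inv, ← mul_assoc,
          mul_inv_cancel₀ (by norm_num : (2:ℝ) ≠ 0), one_mul, one_div]

lemma aux_cpow (t β : ℝ) (ht : 0 < t) (hβ : β = 1 ∨ β = -1) :
    ((t : ℂ) * (Complex.I * β)) ^ (1/2 : ℂ)
      = (Real.sqrt t : ℂ) * Complex.exp (Complex.I * β * Real.pi / 4) := by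
  have hz : (t : ℂ) * (Complex.I * β) ≠ 0 := by
    rcases hβ with h | h <;> simp [h, Complex.ext_iff, ht.ne']
  have harg : ((t : ℂ) * (Complex.I * β)).arg = β * (Real.pi / 2) := by
    rcases hβ with h | h
    · rw [h, show (Complex.I * ((1:ℝ):ℂ)) = Complex.I by push_cast; ring,
        Complex.arg_real_mul _ ht, Complex.arg_I]; ring
    · rw [h, show ((t:ℂ) * (Complex.I * ((-1:ℝ):ℂ))) = (t:ℂ) * (-Complex.I) by push_cast; ring,
        Complex.arg_real_mul _ ht, Complex.arg_neg_I]; ring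
  have habs : ‖(t : ℂ) * (Complex.I * β)‖ = t := by
    rcases hβ with h | h <;>
      simp [h, Complex.norm_def, Complex.normSq_apply, Real.sqrt_mul_self ht.le, ht.le]
  have hlog : Complex.log ((t : ℂ) * (Complex.I * β))
      = (Real.log t : ℂ) + (β * (Real.pi / 2) : ℝ) * Complex.I := by
    apply Complex.ext
    · rw [Complex.log_re, habs]; simp
    · simp [Complex.log_im, harg]
  rw [Complex.cpow_def_of_ne_zero hz, hlog]
  have : ((Real.log t : ℂ) + (β * (Real.pi / 2) : ℝ) * Complex.I) * (1/2 : ℂ)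
      = ((Real.log t / 2 : ℝ) : ℂ) + Complex.I * β * Real.pi / 4 := by
    push_cast; ring
  rw [this, Complex.exp_add, ← Complex.ofReal_exp]
  congr 2
  rw [Real.sqrt_eq_rpow, Real.rpow_def_of_pos ht]
  ring_nf

lemma norm_E_eq_one (β r w : ℝ) :
    ‖Complex.exp (Complex.I * (β:ℂ) * (r:ℂ) * (w:ℂ)^2)‖ = 1 := by
  have : Complex.I * (β:ℂ) * (r:ℂ) * (w:ℂ)^2 = ((β*r*w^2 : ℝ):ℂ) * Complex.I := by
    push_cast; ring
  have hre : ((((β*r*w^2 : ℝ)):ℂ) * Complex.I).re = 0 := by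
    rw [Complex.mul_re, Complex.I_re, Complex.I_im, Complex.ofReal_re, Complex.ofReal_im]
    ring
  rw [this, Complex.norm_exp, hre, Real.exp_zero]


lemma partA (β r : ℝ) (hβ : β = 1 ∨ β = -1) (hr : 1 ≤ r) :
    ‖(∫ w in (0:ℝ)..1, Complex.exp (Complex.I * (β:ℂ) * (r:ℂ) * (w:ℂ)^2))
      - (1/2:ℂ) * ((Real.sqrt (Real.pi/r) : ℝ):ℂ) * Complex.exp (Complex.I * (β:ℂ) * (Real.pi:ℂ) / 4)‖
    ≤ 1 / r := by
  have hr0 : (0:ℝ) < r := lt_of_lt_of_le one_pos hr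
  set z₀ : ℂ := -(Complex.I * (β:ℂ) * (r:ℂ)) with hz₀
  have hz₀ne : z₀ ≠ 0 := by
    rcases hβ with h | h <;>
      simp [hz₀, h, Complex.ext_iff, hr0.ne', Complex.I_ne_zero]
  -- step 1 : uniform bound for ε > 0
  have step1 : ∀ ε : ℝ, 0 < ε →
      ‖(∫ w in (0:ℝ)..1, Complex.exp (-((ε:ℂ) + z₀) * (w:ℂ)^2))
        - ((Real.pi:ℂ) / ((ε:ℂ) + z₀)) ^ (1/2:ℂ) / 2‖ ≤ 1 / r := by
    intro ε hε
    set z : ℂ := (ε:ℂ) + z₀ with hzdef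
    have hzre : 0 < z.re := by
      have hre : z.re = ε := by rw [hzdef, hz₀]; simp
      rw [hre]; exact hε
    have habs : r ≤ ‖z‖ := by
      have him : z.im = -(β * r) := by
        rw [hzdef, hz₀]; simp
      calc r = |z.im| := by rw [him]; rcases hβ with h | h <;> simp [h, abs_of_pos hr0]
        _ ≤ ‖z‖ := Complex.abs_im_le_norm z
    have hint : Integrable (fun w : ℝ => Complex.exp (-z * (w:ℂ)^2)) :=
      integrable_cexp_neg_mul_sq hzre
    have hsplit : (∫ w in Set.Ioi (0:ℝ), Complex.exp (-z * (w:ℂ)^2))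
        = (∫ w in Set.Ioc (0:ℝ) 1, Complex.exp (-z * (w:ℂ)^2))
          + ∫ w in Set.Ioi (1:ℝ), Complex.exp (-z * (w:ℂ)^2) := by
      rw [← MeasureTheory.setIntegral_union (Set.Ioc_disjoint_Ioi le_rfl) measurableSet_Ioi
        hint.integrableOn hint.integrableOn, Set.Ioc_union_Ioi_eq_Ioi zero_le_one]
    have hIoi := integral_gaussian_complex_Ioi hzre
    have : (∫ w in (0:ℝ)..1, Complex.exp (-z * (w:ℂ)^2))
        = ((Real.pi:ℂ) / z) ^ (1/2:ℂ) / 2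
          - ∫ w in Set.Ioi (1:ℝ), Complex.exp (-z * (w:ℂ)^2) := by
      rw [intervalIntegral.integral_of_le zero_le_one]
      rw [← hIoi, hsplit]
      ring
    rw [this]
    have : ((Real.pi:ℂ)/z) ^ (1/2:ℂ)/2 - (∫ w in Set.Ioi (1:ℝ), Complex.exp (-z * (w:ℂ)^2))
        - ((Real.pi:ℂ)/z) ^ (1/2:ℂ)/2 = -(∫ w in Set.Ioi (1:ℝ), Complex.exp (-z * (w:ℂ)^2)) := by
      ring
    rw [this, norm_neg]
    exact tail_bound z hzre r hr habs
  -- step 2 : convergence of the integrals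
  have step2 : Filter.Tendsto
      (fun ε : ℝ => ∫ w in (0:ℝ)..1, Complex.exp (-((ε:ℂ) + z₀) * (w:ℂ)^2))
      (nhdsWithin 0 (Set.Ioi 0))
      (𝓝 (∫ w in (0:ℝ)..1, Complex.exp (Complex.I * (β:ℂ) * (r:ℂ) * (w:ℂ)^2))) := by
    have heq : ∀ w : ℝ, Complex.exp (Complex.I * (β:ℂ) * (r:ℂ) * (w:ℂ)^2)
        = Complex.exp (-(((0:ℝ):ℂ) + z₀) * (w:ℂ)^2) := by
      intro w
      congr 1
      rw [hz₀]
      push_cast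
      ring
    simp_rw [heq]
    apply intervalIntegral.tendsto_integral_filter_of_dominated_convergence (fun _ => 1)
    · filter_upwards with ε
      apply Continuous.aestronglyMeasurable
      fun_prop
    · filter_upwards [self_mem_nhdsWithin] with ε (hε : ε ∈ Set.Ioi (0:ℝ))
      filter_upwards with w _
      apply norm_cexp_neg_mul_sq_le
      have hre : ((ε:ℂ) + z₀).re = ε := by rw [hz₀]; simp
      rw [hre]; exact le_of_lt hε
    · exact intervalIntegrable_const
    · filter_upwards with w _
      have : Filter.Tendsto (fun ε : ℝ => Complex.exp (-((ε:ℂ) + z₀) * (w:ℂ)^2))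
          (𝓝 0) (𝓝 (Complex.exp (-(((0:ℝ):ℂ) + z₀) * (w:ℂ)^2))) := by
        apply Continuous.tendsto
        fun_prop
      exact this.mono_left nhdsWithin_le_nhds
  -- step 3 : convergence of the cpow term
  have hpz : (Real.pi:ℂ) / z₀ = ((Real.pi / r : ℝ):ℂ) * (Complex.I * (β:ℂ)) := by
    have hrne : (r:ℂ) ≠ 0 := by exact_mod_cast hr0.ne'
    rw [div_eq_iff hz₀ne, hz₀]
    rcases hβ with h | h <;> push_cast [h] <;> field_simp <;>
      linear_combination Complex.I_sq
  have hslit : (Real.pi:ℂ) / z₀ ∈ Complex.slitPlane := by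
    rw [Complex.mem_slitPlane_iff, hpz]
    right
    rcases hβ with h | h <;>
      simp [h, Complex.mul_im, Real.pi_ne_zero, hr0.ne', div_eq_zero_iff, Real.pi_pos.ne']
  have step3 : Filter.Tendsto
      (fun ε : ℝ => ((Real.pi:ℂ) / ((ε:ℂ) + z₀)) ^ (1/2:ℂ) / 2)
      (nhdsWithin 0 (Set.Ioi 0))
      (𝓝 (((Real.pi:ℂ) / z₀) ^ (1/2:ℂ) / 2)) := by
    have h1 : Filter.Tendsto (fun ε : ℝ => (Real.pi:ℂ) / ((ε:ℂ) + z₀)) (𝓝 0)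
        (𝓝 ((Real.pi:ℂ) / z₀)) := by
      have : Filter.Tendsto (fun ε : ℝ => ((ε:ℂ) + z₀)) (𝓝 0) (𝓝 z₀) := by
        have h0 : Filter.Tendsto (fun ε : ℝ => (ε:ℂ)) (𝓝 0) (𝓝 (((0:ℝ):ℂ))) :=
          Complex.continuous_ofReal.tendsto 0
        have := h0.add (tendsto_const_nhds (x := z₀))
        simpa using this
      exact (tendsto_const_nhds.div this hz₀ne)
    have h2 := ((continuousAt_cpow_const (b := (1/2:ℂ)) hslit).tendsto).comp h1
    exact ((h2.div_const 2)).mono_left nhdsWithin_le_nhds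
  -- combine
  have hfinal := (step2.sub step3).norm
  have hle : ‖(∫ w in (0:ℝ)..1, Complex.exp (Complex.I * (β:ℂ) * (r:ℂ) * (w:ℂ)^2))
      - ((Real.pi:ℂ) / z₀) ^ (1/2:ℂ) / 2‖ ≤ 1 / r := by
    apply le_of_tendsto hfinal
    filter_upwards [self_mem_nhdsWithin] with ε (hε : ε ∈ Set.Ioi (0:ℝ))
    exact step1 ε hε
  have hval : ((Real.pi:ℂ) / z₀) ^ (1/2:ℂ) / 2
      = (1/2:ℂ) * ((Real.sqrt (Real.pi/r) : ℝ):ℂ)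
          * Complex.exp (Complex.I * (β:ℂ) * (Real.pi:ℂ) / 4) := by
    rw [hpz, aux_cpow (Real.pi / r) β (by positivity) hβ]
    ring
  rw [← hval]
  exact hle

lemma partB (ψ : ℝ → ℂ) (hψ : ContDiff ℝ (⊤ : ℕ∞) ψ) (β : ℝ) (hβ : β = 1 ∨ β = -1) :
    ∃ C : ℝ, ∀ r : ℝ, 1 ≤ r →
      ‖∫ w in (0:ℝ)..1,
          Complex.exp (Complex.I * (β:ℂ) * (r:ℂ) * (w:ℂ)^2) * (ψ w - ψ 0)‖ ≤ C / r := by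
  have hβ1 : |β| = 1 := by rcases hβ with h | h <;> simp [h]
  have hψtop : ContDiff ℝ ((⊤:ℕ∞) : WithTop ℕ∞) ψ := hψ.of_le (by simp)
  have hd1 : Differentiable ℝ ψ := hψtop.differentiable (by simp)
  have hψ' : ContDiff ℝ ((⊤:ℕ∞) : WithTop ℕ∞) (deriv ψ) := (contDiff_infty_iff_deriv.mp hψtop).2
  have hd2 : Differentiable ℝ (deriv ψ) := hψ'.differentiable (by simp)
  have hc1 : Continuous (deriv ψ) := hd2.continuous
  have hc2 : Continuous (deriv (deriv ψ)) := ((contDiff_infty_iff_deriv.mp hψ').2).continuous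
  obtain ⟨M₁, hM₁⟩ := (isCompact_Icc (a := (0:ℝ)) (b := 1)).exists_bound_of_continuousOn
    hc1.continuousOn
  obtain ⟨M₂, hM₂⟩ := (isCompact_Icc (a := (0:ℝ)) (b := 1)).exists_bound_of_continuousOn
    hc2.continuousOn
  have hM₁0 : 0 ≤ M₁ := le_trans (norm_nonneg _) (hM₁ 0 (by norm_num))
  have hM₂0 : 0 ≤ M₂ := le_trans (norm_nonneg _) (hM₂ 0 (by norm_num))
  -- Lipschitz bound for g
  have hg : ∀ w ∈ Set.Icc (0:ℝ) 1, ‖ψ w - ψ 0‖ ≤ M₁ * w := by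
    intro w hw
    have := Convex.norm_image_sub_le_of_norm_hasDerivWithin_le
      (f := ψ) (f' := deriv ψ) (s := Set.Icc (0:ℝ) 1)
      (fun x _ => (hd1 x).hasDerivAt.hasDerivWithinAt) hM₁ (convex_Icc 0 1)
      (Set.left_mem_Icc.mpr zero_le_one) hw
    simpa [Real.norm_eq_abs, _root_.abs_of_nonneg hw.1] using this
  -- second order bound for N
  set Nf : ℝ → ℂ := fun x => (x:ℂ) * deriv ψ x - ψ x with hNf
  have hNder : ∀ x : ℝ, HasDerivAt Nf ((x:ℂ) * deriv (deriv ψ) x) x := by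
    intro x
    have h1 : HasDerivAt (fun w : ℝ => (w : ℂ)) 1 x := by
      have := Complex.ofRealCLM.hasDerivAt (x := x); exact this
    have h2 : HasDerivAt (fun w : ℝ => (w:ℂ) * deriv ψ w)
        (1 * deriv ψ x + (x:ℂ) * deriv (deriv ψ) x) x :=
      h1.mul (hd2 x).hasDerivAt
    have h3 := h2.sub (hd1 x).hasDerivAt
    convert h3 using 1
    · rfl
    · rfl
    ring
  have hN : ∀ w ∈ Set.Icc (0:ℝ) 1, ‖Nf w - Nf 0‖ ≤ M₂ * w^2 := by
    intro w hw
    have hFTC : ∫ x in (0:ℝ)..w, (x:ℂ) * deriv (deriv ψ) x = Nf w - Nf 0 := by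
      apply intervalIntegral.integral_eq_sub_of_hasDerivAt (fun x _ => hNder x)
      apply Continuous.intervalIntegrable
      fun_prop
    rw [← hFTC]
    have := intervalIntegral.norm_integral_le_of_norm_le_const
      (C := M₂ * w) (f := fun x : ℝ => (x:ℂ) * deriv (deriv ψ) x) (a := 0) (b := w) ?_
    · calc ‖∫ x in (0:ℝ)..w, (x:ℂ) * deriv (deriv ψ) x‖ ≤ M₂ * w * |w - 0| := this
        _ = M₂ * w^2 := by rw [sub_zero, _root_.abs_of_nonneg hw.1]; ring
    · intro x hx
      rw [Set.uIoc_of_le hw.1] at hx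
      have hx0 : 0 < x := hx.1
      have hxw : x ≤ w := hx.2
      rw [norm_mul, Complex.norm_real, Real.norm_eq_abs, _root_.abs_of_pos hx0]
      have hb2 : ‖deriv (deriv ψ) x‖ ≤ M₂ :=
        hM₂ x ⟨hx0.le, le_trans hxw hw.2⟩
      calc x * ‖deriv (deriv ψ) x‖ ≤ w * M₂ := by
            apply mul_le_mul hxw hb2 (norm_nonneg _) (le_trans hx0.le hxw)
        _ = M₂ * w := by ring
  refine ⟨2 * M₁ + M₂, fun r hr => ?_⟩
  have hr0 : (0:ℝ) < r := lt_of_lt_of_le one_pos hr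
  set δ : ℝ := (Real.sqrt r)⁻¹ with hδdef
  have hsr : 0 < Real.sqrt r := Real.sqrt_pos.mpr hr0
  have hδ0 : 0 < δ := inv_pos.mpr hsr
  have hδ1 : δ ≤ 1 := by
    rw [hδdef, inv_le_one_iff₀]
    right
    rw [show (1:ℝ) = Real.sqrt 1 by simp]
    exact Real.sqrt_le_sqrt hr
  have hδsq : δ^2 = r⁻¹ := by
    rw [hδdef, ← Real.sqrt_inv]
    exact Real.sq_sqrt (by positivity)
  set E : ℝ → ℂ := fun w => Complex.exp (Complex.I * (β:ℂ) * (r:ℂ) * (w:ℂ)^2) with hE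
  set g : ℝ → ℂ := fun w => ψ w - ψ 0 with hgdef
  have hEgcont : Continuous (fun w : ℝ => E w * g w) := by
    rw [hE, hgdef]; fun_prop
  -- split the integral
  have hsplit : (∫ w in (0:ℝ)..1, E w * g w)
      = (∫ w in (0:ℝ)..δ, E w * g w) + ∫ w in δ..1, E w * g w :=
    (intervalIntegral.integral_add_adjacent_intervals
      (hEgcont.intervalIntegrable _ _) (hEgcont.intervalIntegrable _ _)).symm
  -- bound near 0
  have hbound1 : ‖∫ w in (0:ℝ)..δ, E w * g w‖ ≤ M₁ / r := by
    have := intervalIntegral.norm_integral_le_of_norm_le_const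
      (C := M₁ * δ) (f := fun w => E w * g w) (a := 0) (b := δ) ?_
    · calc ‖∫ w in (0:ℝ)..δ, E w * g w‖ ≤ M₁ * δ * |δ - 0| := this
        _ = M₁ * δ^2 := by rw [sub_zero, _root_.abs_of_pos hδ0]; ring
        _ = M₁ / r := by rw [hδsq]; ring
    · intro w hw
      rw [Set.uIoc_of_le hδ0.le] at hw
      rw [norm_mul, hE, norm_E_eq_one, one_mul]
      calc ‖g w‖ ≤ M₁ * w := hg w ⟨hw.1.le, le_trans hw.2 hδ1⟩
        _ ≤ M₁ * δ := by nlinarith [hw.2]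
  -- integration by parts on [δ, 1]
  set c : ℂ := 2 * Complex.I * (β:ℂ) * (r:ℂ) with hcdef
  have hrC : ((r:ℂ)) ≠ 0 := by exact_mod_cast hr0.ne'
  have hβC : ((β:ℂ)) ≠ 0 := by rcases hβ with h | h <;> norm_num [h]
  have hc0 : c ≠ 0 := by
    rw [hcdef]
    simp [Complex.I_ne_zero, hβC, hrC]
  have hnormcinv : ‖c⁻¹‖ = (2*r)⁻¹ := by
    rw [norm_inv, hcdef]
    congr 1
    simp only [norm_mul, Complex.norm_I, Complex.norm_real, Real.norm_eq_abs, hβ1,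
      _root_.abs_of_pos hr0]
    norm_num
  set F : ℝ → ℂ := fun w => c⁻¹ * (E w * g w * ((w:ℂ))⁻¹) with hF
  set R : ℝ → ℂ := fun w => c⁻¹ * (E w * (((w:ℂ)^2)⁻¹ * (Nf w - Nf 0))) with hR
  have hderF : ∀ x ∈ Set.uIcc δ 1, HasDerivAt F (E x * g x + R x) x := by
    intro x hx
    rw [Set.uIcc_of_le hδ1] at hx
    have hx0 : 0 < x := lt_of_lt_of_le hδ0 hx.1
    have hx0' : (x:ℂ) ≠ 0 := by exact_mod_cast hx0.ne'
    have h1 : HasDerivAt (fun w : ℝ => (w:ℂ)) 1 x := by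
      have := Complex.ofRealCLM.hasDerivAt (x := x); exact this
    have h2 : HasDerivAt (fun w : ℝ => (w:ℂ)^2) ((x:ℂ)+(x:ℂ)) x := by
      have := h1.mul h1; simp only [pow_two, one_mul, mul_one] at this ⊢; exact this
    have h3 : HasDerivAt (fun w : ℝ => Complex.I * (β:ℂ) * (r:ℂ) * (w:ℂ)^2)
        (Complex.I * (β:ℂ) * (r:ℂ) * ((x:ℂ)+(x:ℂ))) x := h2.const_mul _
    have hEx : HasDerivAt E (E x * (Complex.I * (β:ℂ) * (r:ℂ) * ((x:ℂ)+(x:ℂ)))) x := by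
      rw [hE]; exact h3.cexp
    have hgx : HasDerivAt g (deriv ψ x) x := by
      rw [hgdef]
      simpa using ((hd1 x).hasDerivAt.sub_const (ψ 0))
    have hinv : HasDerivAt (fun w : ℝ => ((w:ℂ))⁻¹) (-((x:ℂ)^2)⁻¹) x :=
      (hasDerivAt_inv hx0').comp_ofReal
    have hprod := ((hEx.mul hgx).mul hinv).const_mul c⁻¹
    convert hprod using 1
    · rfl
    · rfl
    rw [hR, hgdef, hNf, hcdef]
    simp only [Pi.mul_apply, Complex.ofReal_zero, zero_mul]
    field_simp
    ring
  have hRcont : ContinuousOn R (Set.uIcc δ 1) := by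
    rw [Set.uIcc_of_le hδ1]
    have hNfcont : Continuous Nf := by rw [hNf]; fun_prop
    apply ContinuousOn.mul continuousOn_const
    apply ContinuousOn.mul (hE ▸ (by fun_prop : Continuous E)).continuousOn
    apply ContinuousOn.mul
    · apply ContinuousOn.inv₀ (by fun_prop)
      intro x hx
      have hx0 : 0 < x := lt_of_lt_of_le hδ0 hx.1
      exact pow_ne_zero 2 (by exact_mod_cast hx0.ne')
    · exact (hNfcont.sub continuous_const).continuousOn
  have hRint : IntervalIntegrable R volume δ 1 := hRcont.intervalIntegrable
  have hderint : IntervalIntegrable (fun x => E x * g x + R x) volume δ 1 :=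
    (hEgcont.intervalIntegrable _ _).add hRint
  have hFTC2 := intervalIntegral.integral_eq_sub_of_hasDerivAt hderF hderint
  have hadd : ∫ x in δ..1, (E x * g x + R x)
      = (∫ x in δ..1, E x * g x) + ∫ x in δ..1, R x :=
    intervalIntegral.integral_add (hEgcont.intervalIntegrable _ _) hRint
  have hmain : ∫ x in δ..1, E x * g x = F 1 - F δ - ∫ x in δ..1, R x := by
    rw [hadd] at hFTC2
    linear_combination hFTC2
  -- bounds for F
  have hnormF : ∀ x : ℝ, 0 < x → x ≤ 1 → ‖F x‖ ≤ M₁ / (2*r) := by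
    intro x hx0 hx1
    have hx0' : (0:ℝ) < x := hx0
    have hEg : ‖F x‖ = (2*r)⁻¹ * (‖g x‖ * x⁻¹) := by
      rw [hF]
      simp only [norm_mul, hnormcinv, norm_inv, Complex.norm_real, Real.norm_eq_abs,
        _root_.abs_of_pos hx0]
      rw [hE, norm_E_eq_one, one_mul]
    rw [hEg]
    have hgb : ‖g x‖ ≤ M₁ * x := hg x ⟨hx0.le, hx1⟩
    calc (2*r)⁻¹ * (‖g x‖ * x⁻¹) ≤ (2*r)⁻¹ * ((M₁ * x) * x⁻¹) := by
          gcongr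
      _ = M₁ / (2*r) := by field_simp
  -- bound for the remainder integral
  have hbound3 : ‖∫ x in δ..1, R x‖ ≤ M₂ / (2*r) := by
    have := intervalIntegral.norm_integral_le_of_norm_le_const
      (C := M₂ / (2*r)) (f := R) (a := δ) (b := 1) ?_
    · calc ‖∫ x in δ..1, R x‖ ≤ M₂ / (2*r) * |1 - δ| := this
        _ ≤ M₂ / (2*r) * 1 := by
            apply mul_le_mul_of_nonneg_left _ (by positivity)
            rw [abs_le]; constructor <;> nlinarith
        _ = M₂ / (2*r) := mul_one _
    · intro x hx
      rw [Set.uIoc_of_le hδ1] at hx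
      have hx0 : 0 < x := lt_trans hδ0 hx.1
      have hx1 : x ≤ 1 := hx.2
      have hxsq : (0:ℝ) < x^2 := by positivity
      have hRx : ‖R x‖ = (2*r)⁻¹ * ((x^2)⁻¹ * ‖Nf x - Nf 0‖) := by
        rw [hR]
        simp only [norm_mul, hnormcinv, norm_inv, norm_pow, Complex.norm_real,
          Real.norm_eq_abs, _root_.abs_of_pos hx0]
        rw [hE, norm_E_eq_one, one_mul]
      rw [hRx]
      have hNb : ‖Nf x - Nf 0‖ ≤ M₂ * x^2 := hN x ⟨hx0.le, hx1⟩
      calc (2*r)⁻¹ * ((x^2)⁻¹ * ‖Nf x - Nf 0‖) ≤ (2*r)⁻¹ * ((x^2)⁻¹ * (M₂ * x^2)) := by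
            gcongr
        _ = M₂ / (2*r) := by field_simp
  -- put everything together
  have hgoal : (∫ w in (0:ℝ)..1,
      Complex.exp (Complex.I * (β:ℂ) * (r:ℂ) * (w:ℂ)^2) * (ψ w - ψ 0))
      = (∫ w in (0:ℝ)..δ, E w * g w) + ∫ w in δ..1, E w * g w := hsplit
  rw [hgoal]
  calc ‖(∫ w in (0:ℝ)..δ, E w * g w) + ∫ w in δ..1, E w * g w‖
      ≤ ‖∫ w in (0:ℝ)..δ, E w * g w‖ + ‖∫ w in δ..1, E w * g w‖ := norm_add_le _ _
    _ ≤ M₁ / r + (M₁/(2*r) + M₁/(2*r) + M₂/(2*r)) := by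
        apply add_le_add hbound1
        rw [hmain]
        calc ‖F 1 - F δ - ∫ x in δ..1, R x‖
            ≤ ‖F 1 - F δ‖ + ‖∫ x in δ..1, R x‖ := norm_sub_le _ _
          _ ≤ (‖F 1‖ + ‖F δ‖) + ‖∫ x in δ..1, R x‖ := by
              apply add_le_add_left (norm_sub_le _ _)
          _ ≤ (M₁/(2*r) + M₁/(2*r)) + M₂/(2*r) := by
              apply add_le_add (add_le_add (hnormF 1 one_pos le_rfl) (hnormF δ hδ0 hδ1)) hbound3
          _ = M₁/(2*r) + M₁/(2*r) + M₂/(2*r) := by ring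
    _ ≤ (2 * M₁ + M₂) / r := by
        have key : M₁/r + (M₁/(2*r) + M₁/(2*r) + M₂/(2*r)) = (2*M₁ + M₂/2)/r := by
          field_simp
          ring
        rw [key]
        gcongr
        linarith


/-- Let `ψ` be smooth with support in `[0,1)` and `β = ±1`.  There is
a constant `C` (depending only on `ψ` and `β`) such that for all `r ≥ 1`,
`|∫₀¹ e^{iβrw²} ψ(w) dw − (1/2)√(π/r) e^{iβπ/4} ψ(0)| ≤ C/r`. -/
theorem endpoint_stationary_phase_leading_term (ψ : ℝ → ℂ)
    (hψ : ContDiff ℝ (⊤ : ℕ∞) ψ) (hsupp : ∀ w : ℝ, 1 ≤ w → ψ w = 0)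
    (β : ℝ) (hβ : β = 1 ∨ β = -1) :
    ∃ C : ℝ, ∀ r : ℝ, 1 ≤ r →
      ‖(∫ w in (0 : ℝ)..1,
          Complex.exp (Complex.I * (β : ℂ) * (r : ℂ) * (w : ℂ) ^ 2) * ψ w) -
        (1 / 2 : ℂ) * ((Real.sqrt (Real.pi / r) : ℝ) : ℂ) *
          Complex.exp (Complex.I * (β : ℂ) * (Real.pi : ℂ) / 4) * ψ 0‖ ≤
        C / r := by
  obtain ⟨C, hC⟩ := partB ψ hψ β hβ
  refine ⟨‖ψ 0‖ + C, fun r hr => ?_⟩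
  have hr0 : (0:ℝ) < r := lt_of_lt_of_le one_pos hr
  have h1 := partA β r hβ hr
  have h2 := hC r hr
  have hcont : Continuous fun w : ℝ => Complex.exp (Complex.I * (β:ℂ) * (r:ℂ) * (w:ℂ)^2) := by
    fun_prop
  have hdecomp : (∫ w in (0:ℝ)..1,
        Complex.exp (Complex.I * (β:ℂ) * (r:ℂ) * (w:ℂ)^2) * ψ w)
      = (∫ w in (0:ℝ)..1, Complex.exp (Complex.I * (β:ℂ) * (r:ℂ) * (w:ℂ)^2)) * ψ 0
        + ∫ w in (0:ℝ)..1,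
            Complex.exp (Complex.I * (β:ℂ) * (r:ℂ) * (w:ℂ)^2) * (ψ w - ψ 0) := by
    rw [← intervalIntegral.integral_mul_const]
    rw [← intervalIntegral.integral_add
      (f := fun w => Complex.exp (Complex.I * (β:ℂ) * (r:ℂ) * (w:ℂ)^2) * ψ 0)
      (g := fun w => Complex.exp (Complex.I * (β:ℂ) * (r:ℂ) * (w:ℂ)^2) * (ψ w - ψ 0))
      ((hcont.mul continuous_const).intervalIntegrable _ _)
      ((hcont.mul ((hψ.continuous.sub continuous_const))).intervalIntegrable _ _)]
    congr 1
    funext w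
    ring
  have heq : (∫ w in (0:ℝ)..1,
        Complex.exp (Complex.I * (β:ℂ) * (r:ℂ) * (w:ℂ)^2) * ψ w)
      - (1/2:ℂ) * ((Real.sqrt (Real.pi/r) : ℝ):ℂ)
          * Complex.exp (Complex.I * (β:ℂ) * (Real.pi:ℂ) / 4) * ψ 0
      = ((∫ w in (0:ℝ)..1, Complex.exp (Complex.I * (β:ℂ) * (r:ℂ) * (w:ℂ)^2))
          - (1/2:ℂ) * ((Real.sqrt (Real.pi/r) : ℝ):ℂ)
              * Complex.exp (Complex.I * (β:ℂ) * (Real.pi:ℂ) / 4)) * ψ 0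
        + ∫ w in (0:ℝ)..1,
            Complex.exp (Complex.I * (β:ℂ) * (r:ℂ) * (w:ℂ)^2) * (ψ w - ψ 0) := by
    rw [hdecomp]
    ring
  rw [heq]
  calc ‖_ + _‖ ≤ ‖((∫ w in (0:ℝ)..1, Complex.exp (Complex.I * (β:ℂ) * (r:ℂ) * (w:ℂ)^2))
          - (1/2:ℂ) * ((Real.sqrt (Real.pi/r) : ℝ):ℂ)
              * Complex.exp (Complex.I * (β:ℂ) * (Real.pi:ℂ) / 4)) * ψ 0‖
        + ‖∫ w in (0:ℝ)..1,
            Complex.exp (Complex.I * (β:ℂ) * (r:ℂ) * (w:ℂ)^2) * (ψ w - ψ 0)‖ :=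
      norm_add_le _ _
    _ ≤ (1/r) * ‖ψ 0‖ + C / r := by
        apply add_le_add _ h2
        rw [norm_mul]
        exact mul_le_mul_of_nonneg_right h1 (norm_nonneg _)
    _ = (‖ψ 0‖ + C) / r := by ring
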